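/- Let n ≥ 3 and let A = {a_0 < … < a_{k−1}} ⊆ C_n with 0 < a_0 and a_{k−1} < n−1 (an internal simplex). Then for each m ∈ {0,…,k−1}, the discrete 2-neighborhood DN^2_m = {α ∈ σ^(n){a_0,…,a_{k−1}} : α(i) = a_m for at least n−2 elements i of C_n} is a subsemiring of the simplex: it is closed under the pointwise maximum (α+β)(x) = max(α(x), β(x)) and under composition (α·β)(x) = β(α(x)). -/

import Mathlib

/-- The simplex σ^(n){a_0,…,a_{k−1}}: monotone maps Fin n → Fin n whose image
is contained in the range of the strictly monotone enumeration `a : Fin k → Fin n`. -/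
def EndoSimplex (n k : ℕ) (a : Fin k → Fin n) : Set (Fin n → Fin n) :=
  {α | Monotone α ∧ ∀ x, α x ∈ Set.range a}

/-- Number of points of `Fin n` at which `α` takes the value `v`. -/
def FixCount (n : ℕ) (α : Fin n → Fin n) (v : Fin n) : ℕ :=
  (Finset.univ.filter (fun i => α i = v)).card

/-- Discrete t-neighborhood DN^t_m of the vertex `ā_m` of the simplex:
elements of the simplex taking the value `a m` at least `n − t` times. -/
def DN (n k : ℕ) (a : Fin k → Fin n) (m : Fin k) (t : ℕ) : Set (Fin n → Fin n) :=
  {α | α ∈ EndoSimplex n k a ∧ n - t ≤ FixCount n α (a m)}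

/-!
Addition: for monotone `α`, `β` the sets `{i | v < α i}` and `{i | v < β i}` are upper sets of a
chain, hence nested; if the first lies inside the second, then `max α β` takes the value `v`
wherever `β` does.

Multiplication: `β ∘ α` takes the value `v` wherever `α` does as soon as `β v = v`. An
element `β` of `DN^2_m` of an internal simplex fixes `v = a m`: if `β v < v`, the `v + 1`
points `≤ v` all miss `v`, so `v ≤ 1`, contradicting `1 ≤ a 0 ≤ β v`; dually if `v < β v`,
using `β v ≤ a (k-1) ≤ n - 2`.
-/

open Finset

section Fibers

variable {ι κ : Type*} [LinearOrder ι] [LinearOrder κ] {α β : ι → κ}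

theorem Monotone.fiber_subset_fiber_max_or (hα : Monotone α) (hβ : Monotone β) (v : κ) :
    (∀ i, α i = v → max (α i) (β i) = v) ∨ (∀ i, β i = v → max (α i) (β i) = v) := by
  rcases ((isUpperSet_Ioi v).preimage hα).total ((isUpperSet_Ioi v).preimage hβ) with h | h
  · exact .inr fun i hi => by
      rw [hi, max_eq_right_iff]
      exact le_of_not_gt fun hv => (h hv).ne' hi
  · exact .inl fun i hi => by
      rw [hi, max_eq_left_iff]
      exact le_of_not_gt fun hv => (h hv).ne' hi

end Fibers

section FixCount

variable {n : ℕ} {α β γ : Fin n → Fin n} {v : Fin n}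

theorem fixCount_le_of_imp (h : ∀ i, α i = v → γ i = v) : FixCount n α v ≤ FixCount n γ v :=
  card_le_card (monotone_filter_right _ fun i _ => h i)

theorem fixCount_le_card_of_imp {s : Finset (Fin n)} (h : ∀ i, α i = v → i ∈ s) :
    FixCount n α v ≤ #s :=
  card_le_card fun i hi => h i (mem_filter.1 hi).2

theorem Monotone.min_fixCount_le_fixCount_max (hα : Monotone α) (hβ : Monotone β) :
    min (FixCount n α v) (FixCount n β v) ≤ FixCount n (fun x => max (α x) (β x)) v := by
  rcases hα.fiber_subset_fiber_max_or hβ v with h | h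
  · exact min_le_of_left_le (fixCount_le_of_imp h)
  · exact min_le_of_right_le (fixCount_le_of_imp h)

theorem fixCount_le_fixCount_comp (hβv : β v = v) :
    FixCount n α v ≤ FixCount n (fun x => β (α x)) v :=
  fixCount_le_of_imp fun i hi => by rw [hi, hβv]

theorem Monotone.apply_eq_of_le_fixCount (hβ : Monotone β) (hlo : ∀ x, 0 < (β x : ℕ))
    (hhi : ∀ x, (β x : ℕ) < n - 1) (hcount : n - 2 ≤ FixCount n β v) : β v = v := by
  rcases lt_trichotomy (β v) v with hlt | heq | hgt
  · have hfiber : FixCount n β v ≤ n - 1 - v := Fin.card_Ioi v ▸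
      fixCount_le_card_of_imp fun i hi => mem_Ioi.2 <| lt_of_not_ge fun hiv =>
        (hi ▸ hβ hiv).not_gt hlt
    have := hlo v
    have : (β v : ℕ) < v := hlt
    omega
  · exact heq
  · have hfiber : FixCount n β v ≤ v := Fin.card_Iio v ▸
      fixCount_le_card_of_imp fun i hi => mem_Iio.2 <| lt_of_not_ge fun hvi =>
        (hi ▸ hβ hvi).not_gt hgt
    have := hhi v
    have : (v : ℕ) < β v := hgt
    omega

end FixCount

namespace EndoSimplex

variable {n k : ℕ} {a : Fin k → Fin n} {α β : Fin n → Fin n}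

theorem max_mem (ha : Monotone a) (hα : α ∈ EndoSimplex n k a) (hβ : β ∈ EndoSimplex n k a) :
    (fun x => max (α x) (β x)) ∈ EndoSimplex n k a := by
  refine ⟨fun x y hxy => max_le_max (hα.1 hxy) (hβ.1 hxy), fun x => ?_⟩
  obtain ⟨i, hi⟩ := hα.2 x
  obtain ⟨j, hj⟩ := hβ.2 x
  exact ⟨max i j, by rw [ha.map_max, hi, hj]⟩

theorem comp_mem (hα : α ∈ EndoSimplex n k a) (hβ : β ∈ EndoSimplex n k a) :
    (fun x => β (α x)) ∈ EndoSimplex n k a :=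
  ⟨hβ.1.comp hα.1, fun x => hβ.2 (α x)⟩

theorem first_le_apply (hk : 0 < k) (ha : Monotone a) (hα : α ∈ EndoSimplex n k a) (x : Fin n) :
    a ⟨0, hk⟩ ≤ α x := by
  obtain ⟨j, hj⟩ := hα.2 x
  exact hj ▸ ha (Fin.le_def.2 (Nat.zero_le j))

theorem apply_le_last (hk : 0 < k) (ha : Monotone a) (hα : α ∈ EndoSimplex n k a) (x : Fin n) :
    α x ≤ a ⟨k - 1, Nat.sub_lt hk Nat.one_pos⟩ := by
  obtain ⟨j, hj⟩ := hα.2 x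
  exact hj ▸ ha (Fin.le_def.2 (Nat.le_sub_one_of_lt j.2))

end EndoSimplex

namespace DN

variable {n k t : ℕ} {a : Fin k → Fin n} {m : Fin k} {α β : Fin n → Fin n}

theorem max_mem (ha : Monotone a) (hα : α ∈ DN n k a m t) (hβ : β ∈ DN n k a m t) :
    (fun x => max (α x) (β x)) ∈ DN n k a m t :=
  ⟨EndoSimplex.max_mem ha hα.1 hβ.1,
    (le_min hα.2 hβ.2).trans (hα.1.1.min_fixCount_le_fixCount_max hβ.1.1)⟩

theorem comp_mem (hα : α ∈ DN n k a m t) (hβ : β ∈ EndoSimplex n k a) (hβv : β (a m) = a m) :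
    (fun x => β (α x)) ∈ DN n k a m t :=
  ⟨EndoSimplex.comp_mem hα.1 hβ, hα.2.trans (fixCount_le_fixCount_comp hβv)⟩

end DN

/-- in an internal simplex (0 < a_0 and a_{k−1} < n−1), the
discrete 2-neighborhood DN^2_m of each vertex is a subsemiring of the simplex:
closed under pointwise maximum and composition. -/
theorem internal_DN2_is_subsemiring (n k : ℕ) (hk : 0 < k)
    (a : Fin k → Fin n) (ha : StrictMono a)
    (h0 : 0 < (a ⟨0, hk⟩ : ℕ))
    (h1 : (a ⟨k - 1, by omega⟩ : ℕ) < n - 1)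
    (m : Fin k)
    (α β : Fin n → Fin n)
    (hα : α ∈ DN n k a m 2) (hβ : β ∈ DN n k a m 2) :
    (fun x => max (α x) (β x)) ∈ DN n k a m 2 ∧
    (fun x => β (α x)) ∈ DN n k a m 2 := by
  have hβv : β (a m) = a m :=
    hβ.1.1.apply_eq_of_le_fixCount
      (fun x => h0.trans_le (Fin.le_def.1 (EndoSimplex.first_le_apply hk ha.monotone hβ.1 x)))
      (fun x => (Fin.le_def.1 (EndoSimplex.apply_le_last hk ha.monotone hβ.1 x)).trans_lt h1) hβ.2
  exact ⟨DN.max_mem ha.monotone hα hβ, DN.comp_mem hα hβ.1 hβv⟩
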